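/- arXiv:2305.14367 — 8 statements merged into one kernel-verified Lean document; each statement's English description precedes it below -/
import Mathlib

section
/- The alternating series sum over k≥1 of (-1)^k/((2k-1)(2k)^2(2k+1)) equals 1/2 - π/4 + π²/48. -/
open Filter Finset Real
open scoped Topology

noncomputable def myg (k : ℕ) : ℝ := (-1) ^ (k + 1) / (2 * (2 * k + 1))
noncomputable def mya (k : ℕ) : ℝ := myg k + myg (k + 1)
noncomputable def myb (k : ℕ) : ℝ := (-1) ^ k / (2 * (k : ℝ) + 2) ^ 2

lemma summable_mya : Summable mya := by
  apply Summable.of_abs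
  have hS : Summable (fun k : ℕ => 1 / ((k : ℝ) + 1) ^ 2) := by
    have := (Real.summable_one_div_nat_pow (p := 2)).2 one_lt_two
    have := (summable_nat_add_iff 1).2 this
    refine this.congr fun n => by push_cast; ring
  refine Summable.of_nonneg_of_le (fun n => abs_nonneg _) (fun k => ?_) hS
  have h1 : (0:ℝ) < 2 * k + 1 := by positivity
  have h3 : (0:ℝ) < 2 * k + 3 := by positivity
  have key : mya k = (-1) ^ (k + 1) * (1 / ((2 * (k:ℝ) + 1) * (2 * k + 3))) := by
    simp only [mya, myg]
    push_cast
    rw [pow_succ, pow_succ]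
    field_simp
    ring
  rw [key, abs_mul, abs_pow, abs_neg, abs_one, one_pow, one_mul,
    abs_of_nonneg (by positivity)]
  rw [div_le_div_iff₀ (by positivity) (by positivity)]
  nlinarith [sq_nonneg ((k:ℝ))]

lemma tendsto_mya : Tendsto (fun n => ∑ i ∈ range n, mya i) atTop (𝓝 (1 / 2 - π / 4)) := by
  have hg : Tendsto (fun n => ∑ i ∈ range n, myg i) atTop (𝓝 (-(π / 8))) := by
    have h := Real.tendsto_sum_pi_div_four.const_mul (-(1/2) : ℝ)
    have hv : -(1/2 : ℝ) * (π / 4) = -(π/8) := by ring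
    rw [hv] at h
    refine h.congr fun n => ?_
    rw [Finset.mul_sum]
    refine Finset.sum_congr rfl fun i _ => ?_
    simp only [myg, pow_succ]
    field_simp
  have hg' : Tendsto (fun n => ∑ i ∈ range (n + 1), myg i) atTop (𝓝 (-(π / 8))) :=
    hg.comp (tendsto_add_atTop_nat 1)
  have h := (hg.add hg').sub_const (myg 0)
  have hval : -(π/8) + -(π/8) - myg 0 = 1/2 - π/4 := by
    simp only [myg]; norm_num; ring
  rw [hval] at h
  refine h.congr fun n => ?_
  simp only [mya, Finset.sum_add_distrib]
  have := Finset.sum_range_succ' myg n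
  linarith [this]

lemma hasSum_mya : HasSum mya (1 / 2 - π / 4) := by
  obtain ⟨L, hL⟩ := summable_mya
  have : L = 1 / 2 - π / 4 := tendsto_nhds_unique hL.tendsto_sum_nat tendsto_mya
  rwa [this] at hL

lemma hasSum_alt_sq : HasSum (fun n : ℕ => (-1 : ℝ) ^ (n + 1) / (n : ℝ) ^ 2) (π ^ 2 / 12) := by
  have hF : HasSum (fun n : ℕ => if Even n then (1:ℝ) / (n:ℝ) ^ 2 else 0) (π ^ 2 / 24) := by
    have hinj : Function.Injective (fun m : ℕ => 2 * m) := fun a b h => by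
      simp only at h; omega
    rw [← Function.Injective.hasSum_iff hinj (fun n hn => by
      simp only [Set.mem_range, not_exists] at hn
      have hne : ¬ Even n := by rintro ⟨r, rfl⟩; exact hn r (by omega)
      simp [hne])]
    have h4 := hasSum_zeta_two.div_const 4
    have hval : (π^2/6)/4 = π^2/24 := by ring
    rw [hval] at h4
    refine h4.congr_fun fun m => ?_
    simp only [Function.comp]
    have he : Even (2 * m) := ⟨m, by omega⟩
    rw [if_pos he, div_div]
    congr 1
    push_cast; ring
  have h := hasSum_zeta_two.sub (hF.mul_left 2)
  have hval : π^2/6 - 2 * (π^2/24) = π^2/12 := by ring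
  rw [hval] at h
  refine h.congr_fun fun n => ?_
  rcases Nat.even_or_odd n with he | ho
  · rw [if_pos he]
    have : (-1 : ℝ) ^ (n + 1) = -1 := Odd.neg_one_pow (by exact he.add_one)
    rw [this]; ring
  · rw [if_neg (Nat.not_even_iff_odd.mpr ho)]
    have : (-1 : ℝ) ^ (n + 1) = 1 := Even.neg_one_pow (by exact ho.add_one)
    rw [this]; ring

lemma hasSum_myb : HasSum myb (π ^ 2 / 48) := by
  have h := (hasSum_nat_add_iff (f := fun n : ℕ => (-1 : ℝ) ^ (n + 1) / (n : ℝ) ^ 2) 1).2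
    (by simpa using hasSum_alt_sq)
  have h4 := h.div_const 4
  have hval : π^2/12/4 = π^2/48 := by ring
  rw [hval] at h4
  refine h4.congr_fun fun k => ?_
  simp only [myb]
  have : (-1 : ℝ) ^ (k + 1 + 1) = (-1) ^ k := by rw [pow_succ, pow_succ]; ring
  rw [this, div_div]
  congr 1
  push_cast; ring

theorem stmt_3 :
    ∑' k : ℕ, (-1 : ℝ) ^ (k + 1) / ((2 * (k : ℝ) + 1) * (2 * k + 2) ^ 2 * (2 * k + 3)) =
      1 / 2 - Real.pi / 4 + Real.pi ^ 2 / 48 := by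
  have h := hasSum_mya.add hasSum_myb
  have heq : ∀ k : ℕ, (-1 : ℝ) ^ (k + 1) / ((2 * (k : ℝ) + 1) * (2 * k + 2) ^ 2 * (2 * k + 3))
      = mya k + myb k := by
    intro k
    simp only [mya, myb, myg]
    push_cast
    rw [pow_succ, pow_succ]
    have h1 : (2 * (k:ℝ) + 1) ≠ 0 := by positivity
    have h2 : (2 * (k:ℝ) + 2) ≠ 0 := by positivity
    have h3 : (2 * (k:ℝ) + 3) ≠ 0 := by positivity
    field_simp
    ring
  rw [show (1:ℝ)/2 - π/4 + π^2/48 = (1/2 - π/4) + π^2/48 by ring]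
  exact (h.congr_fun heq).tsum_eq
end

section
/- The series sum over k≥1 of 1/((2k-1)(2k)^3(2k+1)) equals ln(2) - 1/2 - ζ(3)/8. -/
open Filter Finset Real Topology

noncomputable def aSeq (m : ℕ) : ℝ := ∑ i ∈ range m, (-1 : ℝ) ^ i / (i + 1)
noncomputable def hSeq (m : ℕ) : ℝ := ∑ i ∈ range m, 1 / ((i : ℝ) + 1)

lemma hSeq_eq_harmonic (m : ℕ) : hSeq m = ((harmonic m : ℚ) : ℝ) := by
  induction m with
  | zero => simp [hSeq]
  | succ n ih =>
    rw [hSeq, sum_range_succ, ← hSeq, ih, harmonic_succ]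
    push_cast
    rw [one_div]

lemma aSeq_succ (m : ℕ) : aSeq (m + 1) = aSeq m + (-1 : ℝ) ^ m / (m + 1) := by
  rw [aSeq, sum_range_succ, ← aSeq]

lemma hSeq_succ (m : ℕ) : hSeq (m + 1) = hSeq m + 1 / ((m : ℝ) + 1) := by
  rw [hSeq, sum_range_succ, ← hSeq]

lemma aSeq_even (N : ℕ) : aSeq (2 * N) = hSeq (2 * N) - hSeq N := by
  induction N with
  | zero => simp [aSeq, hSeq]
  | succ n ih =>
    have h1 : 2 * (n + 1) = (2 * n + 1) + 1 := by ring
    rw [h1, aSeq_succ, aSeq_succ, hSeq_succ, hSeq_succ, hSeq_succ, ih]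
    have h2 : (-1 : ℝ) ^ (2 * n) = 1 := by
      rw [pow_mul]; norm_num
    have h3 : (-1 : ℝ) ^ (2 * n + 1) = -1 := by
      rw [pow_succ, h2]; norm_num
    rw [h2, h3]
    push_cast
    have e1 : (2 : ℝ) * n + 1 ≠ 0 := by positivity
    have e2 : (2 : ℝ) * n + 1 + 1 ≠ 0 := by positivity
    have e3 : (n : ℝ) + 1 ≠ 0 := by positivity
    field_simp
    ring

lemma aSeq_odd (N : ℕ) : aSeq (2 * N + 1) = aSeq (2 * N) + 1 / (2 * (N : ℝ) + 1) := by
  rw [aSeq_succ]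
  have h2 : (-1 : ℝ) ^ (2 * N) = 1 := by rw [pow_mul]; norm_num
  rw [h2]
  push_cast
  ring_nf

noncomputable def g (k : ℕ) : ℝ := 1 / ((2 * (k : ℝ) + 1) * (2 * k + 2) * (2 * k + 3))

lemma sum_g (N : ℕ) : ∑ k ∈ range N, g k = (aSeq (2 * N) + aSeq (2 * N + 1)) / 2 - 1 / 2 := by
  induction N with
  | zero => simp [aSeq]
  | succ n ih =>
    have h3 : (-1 : ℝ) ^ (2 * n + 1) = -1 := by
      rw [pow_succ, pow_mul]; norm_num
    have hs : aSeq (2 * (n + 1)) = aSeq (2 * n) + 1 / (2 * (n : ℝ) + 1) - 1 / (2 * (n : ℝ) + 2) := by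
      have h1 : 2 * (n + 1) = (2 * n + 1) + 1 := by ring
      rw [h1, aSeq_succ, aSeq_odd, h3]
      push_cast
      ring
    rw [sum_range_succ, ih, aSeq_odd (n + 1), hs, aSeq_odd n, g]
    push_cast
    have e1 : (2 : ℝ) * n + 1 ≠ 0 := by positivity
    have e2 : (2 : ℝ) * n + 2 ≠ 0 := by positivity
    have e3 : (2 : ℝ) * n + 3 ≠ 0 := by positivity
    have e4 : (2 : ℝ) * n + 1 + 1 ≠ 0 := by positivity
    have e5 : (2 : ℝ) * (n + 1) + 1 ≠ 0 := by positivity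
    field_simp
    ring

lemma tendsto_hSeq_sub_log :
    Tendsto (fun m : ℕ => hSeq m - Real.log m) atTop (𝓝 Real.eulerMascheroniConstant) := by
  have := Real.tendsto_harmonic_sub_log
  refine this.congr fun n => ?_
  rw [hSeq_eq_harmonic]

lemma tendsto_aSeq_even : Tendsto (fun N : ℕ => aSeq (2 * N)) atTop (𝓝 (Real.log 2)) := by
  have h2N : Tendsto (fun N : ℕ => 2 * N) atTop atTop :=
    tendsto_atTop_mono (f := id) (fun n => by simp only [id]; omega) tendsto_id
  have hA : Tendsto (fun N : ℕ => (hSeq (2 * N) - Real.log (2 * N : ℕ)) -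
      (hSeq N - Real.log N) + Real.log 2) atTop
      (𝓝 (Real.eulerMascheroniConstant - Real.eulerMascheroniConstant + Real.log 2)) :=
    ((tendsto_hSeq_sub_log.comp h2N).sub tendsto_hSeq_sub_log).add_const _
  rw [sub_self, zero_add] at hA
  refine hA.congr' ?_
  filter_upwards [eventually_ge_atTop 1] with N hN
  have hN0 : (N : ℝ) ≠ 0 := Nat.cast_ne_zero.mpr (by omega)
  have : Real.log (2 * N : ℕ) = Real.log 2 + Real.log N := by
    push_cast
    rw [Real.log_mul (by norm_num) hN0]
  rw [this, aSeq_even]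
  ring

lemma tendsto_aSeq_odd : Tendsto (fun N : ℕ => aSeq (2 * N + 1)) atTop (𝓝 (Real.log 2)) := by
  have h0 : Tendsto (fun N : ℕ => 1 / (2 * (N : ℝ) + 1)) atTop (𝓝 0) := by
    apply squeeze_zero (fun n => by positivity) (g := fun N : ℕ => 1 / ((N : ℝ) + 1))
    · intro n
      apply one_div_le_one_div_of_le (by positivity)
      have : (0:ℝ) ≤ (n:ℝ) := Nat.cast_nonneg n
      linarith
    · exact tendsto_one_div_add_atTop_nhds_zero_nat
  have := tendsto_aSeq_even.add h0
  rw [add_zero] at this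
  exact this.congr fun N => (aSeq_odd N).symm

lemma tendsto_sum_g : Tendsto (fun N : ℕ => ∑ k ∈ range N, g k) atTop
    (𝓝 (Real.log 2 - 1 / 2)) := by
  have := ((tendsto_aSeq_even.add tendsto_aSeq_odd).div_const 2).sub_const (1 / 2)
  have heq : (Real.log 2 + Real.log 2) / 2 - 1 / 2 = Real.log 2 - 1 / 2 := by ring
  rw [heq] at this
  exact this.congr fun N => (sum_g N).symm

noncomputable def hcube (k : ℕ) : ℝ := 1 / (2 * (k : ℝ) + 2) ^ 3

noncomputable def z3 : ℝ := ∑' n : ℕ, 1 / ((n : ℝ) + 1) ^ 3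

lemma summable_cube : Summable (fun n : ℕ => 1 / ((n : ℝ) + 1) ^ 3) := by
  have : Summable (fun n : ℕ => 1 / (n : ℝ) ^ 3) := by
    rw [summable_one_div_nat_pow]; norm_num
  have h := (summable_nat_add_iff 1).mpr this
  exact h.congr fun n => by push_cast; ring_nf

lemma hasSum_hcube : HasSum hcube (z3 / 8) := by
  have h := (summable_cube.hasSum.div_const 8)
  refine h.congr_fun fun k => ?_
  rw [hcube]
  have : (2 * (k : ℝ) + 2) ^ 3 = 8 * ((k : ℝ) + 1) ^ 3 := by ring
  rw [this]
  field_simp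

noncomputable def f (k : ℕ) : ℝ := 1 / ((2 * (k : ℝ) + 1) * (2 * k + 2) ^ 3 * (2 * k + 3))

lemma f_eq (k : ℕ) : f k = g k - hcube k := by
  rw [f, g, hcube]
  have e1 : (2 : ℝ) * k + 1 ≠ 0 := by positivity
  have e2 : (2 : ℝ) * k + 2 ≠ 0 := by positivity
  have e3 : (2 : ℝ) * k + 3 ≠ 0 := by positivity
  field_simp
  ring

lemma hasSum_f : HasSum f (Real.log 2 - 1 / 2 - z3 / 8) := by
  rw [(hasSum_iff_tendsto_nat_of_nonneg (fun k => by rw [f]; positivity) _)]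
  have hT : Tendsto (fun N : ℕ => (∑ k ∈ range N, g k) - ∑ k ∈ range N, hcube k) atTop
      (𝓝 (Real.log 2 - 1 / 2 - z3 / 8)) :=
    tendsto_sum_g.sub hasSum_hcube.tendsto_sum_nat
  refine hT.congr fun N => ?_
  rw [← Finset.sum_sub_distrib]
  exact Finset.sum_congr rfl fun k _ => (f_eq k).symm

lemma zeta_three : riemannZeta 3 = (z3 : ℂ) := by
  rw [zeta_eq_tsum_one_div_nat_add_one_cpow (by norm_num), z3, Complex.ofReal_tsum]
  refine tsum_congr fun n => ?_
  have : (3 : ℂ) = ((3 : ℕ) : ℂ) := by norm_num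
  rw [this, Complex.cpow_natCast]
  push_cast
  norm_num

theorem stmt_4 :
    ∑' k : ℕ, 1 / ((2 * (k : ℂ) + 1) * (2 * k + 2) ^ 3 * (2 * k + 3)) =
      (Real.log 2 : ℂ) - 1 / 2 - riemannZeta 3 / 8 := by
  have h1 : ∑' k : ℕ, 1 / ((2 * (k : ℂ) + 1) * (2 * k + 2) ^ 3 * (2 * k + 3)) =
      ((Real.log 2 - 1 / 2 - z3 / 8 : ℝ) : ℂ) := by
    rw [← hasSum_f.tsum_eq, Complex.ofReal_tsum]
    refine tsum_congr fun k => ?_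
    rw [f]
    push_cast
    norm_num
  rw [h1, zeta_three]
  push_cast
  ring
end

section
/- The alternating series sum over k≥1 of (-1)^k/((2k-1)(2k)^3(2k+1)) equals (ln(2) - 1)/2 + (3/32)ζ(3). -/
/-!
With `n = 2k + 2`, partial fractions give
`1 / ((n - 1) n³ (n + 1)) = (1/(n - 1) + 1/(n + 1)) / 2 - 1/n - 1/n³`,
so the `k`-th term is a telescoping difference, plus half a term of the alternating harmonic
series, plus an eighth of a term of `∑ (-1)ᵏ / (k + 1)³ = (3/4) ζ(3)`. The alternating harmonic
series converges only conditionally, so the pieces are summed along the partial sums of length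
`2n`, where it equals `H₂ₙ - Hₙ = (H₂ₙ - log 2n) - (Hₙ - log n) + log 2 → log 2`.
-/

open Filter Finset Topology

lemma sum_range_two_mul_neg_one_pow_div_succ (n : ℕ) :
    ∑ k ∈ range (2 * n), (-1 : ℝ) ^ k / (k + 1) = harmonic (2 * n) - harmonic n := by
  induction n with
  | zero => simp
  | succ n ih =>
    rw [Nat.mul_succ, sum_range_succ, sum_range_succ, ih, harmonic_succ, harmonic_succ,
      harmonic_succ, pow_succ, pow_mul]
    push_cast
    field_simp
    ring

lemma tendsto_sum_range_two_mul_neg_one_pow_div_succ :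
    Tendsto (fun n => ∑ k ∈ range (2 * n), (-1 : ℝ) ^ k / (k + 1)) atTop (𝓝 (Real.log 2)) := by
  have h := ((Real.tendsto_harmonic_sub_log.comp (tendsto_id.const_mul_atTop' two_pos)).sub
    Real.tendsto_harmonic_sub_log).add_const (Real.log 2)
  rw [sub_self, zero_add] at h
  refine h.congr' ?_
  filter_upwards [eventually_ne_atTop 0] with n hn
  simp [sum_range_two_mul_neg_one_pow_div_succ, Real.log_mul, hn]
  ring

lemma HasSum.neg_one_pow_mul {R : Type*} [Ring R] [TopologicalSpace R] [IsTopologicalAddGroup R]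
    {f : ℕ → R} {a b : R} (heven : HasSum (fun m => f (2 * m)) a)
    (hodd : HasSum (fun m => f (2 * m + 1)) b) : HasSum (fun k => (-1) ^ k * f k) (a - b) := by
  rw [sub_eq_add_neg]
  exact HasSum.even_add_odd (by simpa [pow_mul] using heven)
    (by simpa [pow_succ, pow_mul] using hodd.neg)

lemma hasSum_neg_one_pow_div_succ_pow {p : ℕ} (hp : 1 < p) :
    HasSum (fun k : ℕ => (-1 : ℝ) ^ k / (k + 1) ^ p)
      ((1 - 2 / 2 ^ p) * ∑' k : ℕ, 1 / ((k : ℝ) + 1) ^ p) := by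
  set f : ℕ → ℝ := fun k => 1 / ((k : ℝ) + 1) ^ p
  have hf : Summable f := by
    simpa [f] using (summable_nat_add_iff 1).mpr (Real.summable_one_div_nat_pow.mpr hp)
  have hodd_eq (m : ℕ) : f (2 * m + 1) = f m / 2 ^ p := by
    simp only [f]
    push_cast
    rw [show (2 * m + 1 + 1 : ℝ) = 2 * (m + 1) by ring, mul_pow]
    field_simp
  have hodd : HasSum (fun m => f (2 * m + 1)) (tsum f / 2 ^ p) := by
    simpa only [hodd_eq] using hf.hasSum.div_const _
  have heven : HasSum (fun m => f (2 * m)) (tsum f - tsum f / 2 ^ p) := by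
    have hs : Summable (fun m => f (2 * m)) := hf.comp_injective (fun a b h => by omega)
    have hsplit := tsum_even_add_odd hs hodd.summable
    rw [hodd.tsum_eq] at hsplit
    convert hs.hasSum using 1
    linarith
  have h := heven.neg_one_pow_mul hodd
  rw [show tsum f - tsum f / 2 ^ p - tsum f / 2 ^ p = (1 - 2 / 2 ^ p) * tsum f by ring] at h
  simpa only [f, mul_one_div] using h

lemma riemannZeta_natCast_eq_ofReal_tsum {p : ℕ} (hp : 1 < p) :
    riemannZeta p = ((∑' k : ℕ, 1 / ((k : ℝ) + 1) ^ p : ℝ) : ℂ) := by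
  rw [zeta_eq_tsum_one_div_nat_add_one_cpow (by simpa using hp), Complex.ofReal_tsum]
  simp [Complex.cpow_natCast]

lemma Summable.hasSum_of_tendsto_sum_range {G : Type*} [AddCommMonoid G] [TopologicalSpace G]
    [T2Space G] {f : ℕ → G} {a : G} {φ : ℕ → ℕ} (hf : Summable f) (hφ : Tendsto φ atTop atTop)
    (h : Tendsto (fun n => ∑ k ∈ range (φ n), f k) atTop (𝓝 a)) : HasSum f a := by
  rw [← tendsto_nhds_unique (hf.hasSum.tendsto_sum_nat.comp hφ) h]
  exact hf.hasSum

noncomputable def alternatingTerm (k : ℕ) : ℝ :=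
  (-1) ^ (k + 1) / ((2 * (k : ℝ) + 1) * (2 * k + 2) ^ 3 * (2 * k + 3))

noncomputable def signedOddRecip (k : ℕ) : ℝ := (-1) ^ (k + 1) / (2 * (k : ℝ) + 1)

lemma alternatingTerm_eq (k : ℕ) :
    alternatingTerm k = (signedOddRecip k - signedOddRecip (k + 1)) / 2
      + (-1) ^ k / (k + 1) / 2 + (-1) ^ k / (k + 1) ^ 3 / 8 := by
  simp only [alternatingTerm, signedOddRecip, pow_succ]
  push_cast
  field_simp
  ring

lemma summable_alternatingTerm : Summable alternatingTerm := by
  refine .of_norm_bounded ((summable_nat_add_iff 1).mpr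
    (Real.summable_one_div_nat_pow.mpr (by norm_num : 1 < 3))) fun k => ?_
  rw [alternatingTerm, norm_div, norm_pow, norm_neg, norm_one, one_pow,
    Real.norm_of_nonneg (by positivity)]
  push_cast
  gcongr
  have hk : (0 : ℝ) ≤ k := k.cast_nonneg
  calc ((k : ℝ) + 1) ^ 3 ≤ ((k : ℝ) + 1) ^ 3 * (8 * ((2 * k + 1) * (2 * k + 3))) :=
        le_mul_of_one_le_right (by positivity) (by nlinarith)
    _ = (2 * k + 1) * (2 * k + 2) ^ 3 * (2 * k + 3) := by ring

lemma tendsto_signedOddRecip : Tendsto signedOddRecip atTop (𝓝 0) := by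
  refine squeeze_zero_norm (fun k => ?_) tendsto_one_div_add_atTop_nhds_zero_nat
  rw [signedOddRecip, norm_div, norm_pow, norm_neg, norm_one, one_pow,
    Real.norm_of_nonneg (by positivity)]
  gcongr
  linarith

lemma hasSum_alternatingTerm :
    HasSum alternatingTerm ((Real.log 2 - 1) / 2 + 3 / 32 * ∑' k : ℕ, 1 / ((k : ℝ) + 1) ^ 3) := by
  have h2n : Tendsto (fun n : ℕ => 2 * n) atTop atTop := tendsto_id.const_mul_atTop' two_pos
  refine summable_alternatingTerm.hasSum_of_tendsto_sum_range h2n ?_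
  have hpartial (N : ℕ) : ∑ k ∈ range N, alternatingTerm k =
      (signedOddRecip 0 - signedOddRecip N) / 2 + (∑ k ∈ range N, (-1) ^ k / ((k : ℝ) + 1)) / 2
      + (∑ k ∈ range N, (-1) ^ k / ((k : ℝ) + 1) ^ 3) / 8 := by
    simp only [alternatingTerm_eq, sum_add_distrib, ← sum_div, sum_range_sub']
  simp_rw [hpartial]
  have hrecip : Tendsto (fun n => signedOddRecip (2 * n)) atTop (𝓝 0) :=
    tendsto_signedOddRecip.comp h2n
  have heta : Tendsto (fun n => ∑ k ∈ range (2 * n), (-1) ^ k / ((k : ℝ) + 1) ^ 3) atTop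
      (𝓝 ((1 - 2 / 2 ^ 3) * ∑' k : ℕ, 1 / ((k : ℝ) + 1) ^ 3)) :=
    (hasSum_neg_one_pow_div_succ_pow (by norm_num)).tendsto_sum_nat.comp h2n
  have hc0 : signedOddRecip 0 = -1 := by norm_num [signedOddRecip]
  convert ((tendsto_const_nhds.sub hrecip).div_const 2).add
    (tendsto_sum_range_two_mul_neg_one_pow_div_succ.div_const 2) |>.add (heta.div_const 8) using 2
  rw [hc0]
  ring

theorem stmt_5 :
    ∑' k : ℕ, (-1 : ℂ) ^ (k + 1) / ((2 * (k : ℂ) + 1) * (2 * k + 2) ^ 3 * (2 * k + 3)) =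
      ((Real.log 2 : ℂ) - 1) / 2 + (3 / 32) * riemannZeta 3 := by
  have hzeta := riemannZeta_natCast_eq_ofReal_tsum (p := 3) (by norm_num)
  push_cast at hzeta
  have hterm (k : ℕ) : (-1 : ℂ) ^ (k + 1) / ((2 * (k : ℂ) + 1) * (2 * k + 2) ^ 3 * (2 * k + 3)) =
      (alternatingTerm k : ℂ) := by
    simp [alternatingTerm]
  rw [hzeta, tsum_congr hterm, ← Complex.ofReal_tsum, hasSum_alternatingTerm.tsum_eq]
  push_cast
  ring
end

section
/- For every real z with 0 < z < 1, the series sum over k≥1 of z^(2k)/((2k-1)(2k)^3(2k+1)) equals -(1/4)((1-z)²/z)·ln(1-z) + (1/4)((1+z)²/z)·ln(1+z) - (1/8)Li₃(z²) - 1/2. -/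
noncomputable def Li3 (x : ℝ) : ℝ := ∑' n : ℕ, x ^ (n + 1) / ((n : ℝ) + 1) ^ 3

/-!
With `m = 2k + 2`, partial fractions give
`1 / ((m - 1) m³ (m + 1)) = (1/2)/(m - 1) - 1/m - 1/m³ + (1/2)/(m + 1)`,
so the series splits into four series over even exponents. The outer two are shifts of the odd
part `artanh z = (log (1 + z) - log (1 - z)) / 2` of `-log (1 - z)`, the second is
`-log (1 - z²) / 2`, and the third is `Li₃(z²) / 8`.
-/

open Real

lemma div_pred_mul_pow_three_mul_succ (x : ℝ) {m : ℝ} (h0 : m ≠ 0) (hm1 : m - 1 ≠ 0)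
    (hp1 : m + 1 ≠ 0) :
    x / ((m - 1) * m ^ 3 * (m + 1)) =
      1 / 2 * (x / (m - 1)) - x / m - x / m ^ 3 + 1 / 2 * (x / (m + 1)) := by
  field_simp
  ring

lemma hasSum_Li3 {x : ℝ} (hx : |x| ≤ 1) :
    HasSum (fun n : ℕ => x ^ (n + 1) / ((n : ℝ) + 1) ^ 3) (Li3 x) := by
  refine Summable.hasSum (Summable.of_norm_bounded (g := fun n : ℕ => 1 / ((n : ℝ) + 1) ^ 3) ?_
    fun n => ?_)
  · exact_mod_cast (summable_nat_add_iff 1).2 (Real.summable_one_div_nat_pow.2 (by norm_num))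
  · rw [norm_div, norm_pow, Real.norm_eq_abs, norm_pow, Real.norm_of_nonneg (by positivity)]
    gcongr
    exact pow_le_one₀ (abs_nonneg x) hx

section EvenExponents

variable {z : ℝ}

lemma hasSum_odd_pow_div (hz : |z| < 1) :
    HasSum (fun k : ℕ => z ^ (2 * k + 1) / (2 * (k : ℝ) + 1)) ((log (1 + z) - log (1 - z)) / 2) :=
  ((hasSum_log_sub_log_of_abs_lt_one hz).div_const 2).congr_fun fun k => by ring

lemma hasSum_pow_div_two_mul_add_one (hz : |z| < 1) :
    HasSum (fun k : ℕ => z ^ (2 * k + 2) / (2 * (k : ℝ) + 1))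
      (z * ((log (1 + z) - log (1 - z)) / 2)) :=
  ((hasSum_odd_pow_div hz).mul_left z).congr_fun fun k => by ring

lemma hasSum_pow_div_two_mul_add_two (hz : |z| < 1) :
    HasSum (fun k : ℕ => z ^ (2 * k + 2) / (2 * (k : ℝ) + 2)) (-log (1 - z ^ 2) / 2) := by
  have hz2 : |z ^ 2| < 1 := by rw [abs_pow]; exact pow_lt_one₀ (abs_nonneg z) hz two_ne_zero
  refine ((hasSum_pow_div_log_of_abs_lt_one hz2).div_const 2).congr_fun fun k => ?_
  rw [← pow_mul]
  field_simp
  ring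

lemma hasSum_pow_div_two_mul_add_two_pow_three (hz : |z| ≤ 1) :
    HasSum (fun k : ℕ => z ^ (2 * k + 2) / (2 * (k : ℝ) + 2) ^ 3) (Li3 (z ^ 2) / 8) := by
  have hz2 : |z ^ 2| ≤ 1 := by rw [abs_pow]; exact pow_le_one₀ (abs_nonneg z) hz
  refine ((hasSum_Li3 hz2).div_const 8).congr_fun fun k => ?_
  rw [← pow_mul]
  field_simp
  ring

lemma hasSum_pow_div_two_mul_add_three (hz : |z| < 1) (hz0 : z ≠ 0) :
    HasSum (fun k : ℕ => z ^ (2 * k + 2) / (2 * (k : ℝ) + 3))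
      (((log (1 + z) - log (1 - z)) / 2 - z) / z) := by
  have hshift := (hasSum_nat_add_iff' 1).2 (hasSum_odd_pow_div hz)
  rw [Finset.sum_range_one, pow_one, Nat.cast_zero, mul_zero, zero_add, div_one] at hshift
  refine (hshift.div_const z).congr_fun fun k => ?_
  push_cast
  field_simp
  ring

end EvenExponents

theorem stmt_8 (z : ℝ) (h0 : 0 < z) (h1 : z < 1) :
    ∑' k : ℕ, z ^ (2 * k + 2) / ((2 * (k : ℝ) + 1) * (2 * k + 2) ^ 3 * (2 * k + 3)) =
      -(1 / 4) * ((1 - z) ^ 2 / z) * Real.log (1 - z)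
        + (1 / 4) * ((1 + z) ^ 2 / z) * Real.log (1 + z)
        - (1 / 8) * Li3 (z ^ 2) - 1 / 2 := by
  have hz : |z| < 1 := by rwa [abs_of_pos h0]
  have hsum := (((hasSum_pow_div_two_mul_add_one hz).mul_left (1 / 2)).sub
    (hasSum_pow_div_two_mul_add_two hz)).sub (hasSum_pow_div_two_mul_add_two_pow_three hz.le)
    |>.add ((hasSum_pow_div_two_mul_add_three hz h0.ne').mul_left (1 / 2))
  have hterm : ∀ k : ℕ, z ^ (2 * k + 2) / ((2 * (k : ℝ) + 1) * (2 * k + 2) ^ 3 * (2 * k + 3)) =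
      1 / 2 * (z ^ (2 * k + 2) / (2 * (k : ℝ) + 1)) - z ^ (2 * k + 2) / (2 * (k : ℝ) + 2)
        - z ^ (2 * k + 2) / (2 * (k : ℝ) + 2) ^ 3 + 1 / 2 * (z ^ (2 * k + 2) / (2 * (k : ℝ) + 3)) := by
    intro k
    rw [show 2 * (k : ℝ) + 1 = 2 * k + 2 - 1 by ring, show 2 * (k : ℝ) + 3 = 2 * k + 2 + 1 by ring]
    exact div_pred_mul_pow_three_mul_succ _ (by positivity) (by linarith) (by positivity)
  have hlog : log (1 - z ^ 2) = log (1 - z) + log (1 + z) := by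
    rw [← log_mul (by linarith) (by linarith)]
    ring_nf
  simp_rw [hterm, hsum.tsum_eq, hlog]
  field_simp
  ring
end

section
/- The series sum over k≥1 of 1/(2^(k+1)·(2k-1)·k·(2k+1)) equals (3/(2√2))·ln(1+√2) - (1/2)(ln(2)+1). -/
/-!
Partial fractions split the summand into `2⁻ᵏ⁻² (1/(2k+1) - 1/(k+1) + 1/(2k+3))`.
The middle part is the series of `-log (1 - x)` at `x = 1/2`. The outer two are, up to a shift
of index, the series `artanh x = ∑ x ^ (2k+1) / (2k+1)` at `x = 1/√2`, where `x ^ (2k) = 2⁻ᵏ`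
and `artanh (1/√2) = log (1 + √2)`.
-/

open Real

lemma log_one_add_sub_log_one_sub_sqrt_two_div_two :
    log (1 + √2 / 2) - log (1 - √2 / 2) = 2 * log (1 + √2) := by
  have hsq : √2 * √2 = 2 := mul_self_sqrt zero_le_two
  have hlt : √2 < 2 := by nlinarith [sqrt_nonneg 2]
  have hsub : 0 < 1 - √2 / 2 := by linarith
  have hfactor : 1 + √2 / 2 = (1 - √2 / 2) * (1 + √2) ^ 2 := by nlinarith
  rw [hfactor, log_mul hsub.ne' (by positivity), log_pow]
  push_cast
  ring

lemma hasSum_one_div_two_pow_mul_two_mul_add_one :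
    HasSum (fun k : ℕ => 1 / (2 ^ k * (2 * (k : ℝ) + 1))) (√2 * log (1 + √2)) := by
  have hsq : √2 * √2 = 2 := mul_self_sqrt zero_le_two
  have habs : |√2 / 2| < 1 := by
    rw [abs_of_pos (by positivity)]
    nlinarith
  have h := hasSum_log_sub_log_of_abs_lt_one habs
  rw [log_one_add_sub_log_one_sub_sqrt_two_div_two] at h
  rw [show √2 * log (1 + √2) = √2 / 2 * (2 * log (1 + √2)) by ring]
  refine (h.mul_left (√2 / 2)).congr_fun fun k => ?_
  have hpow : (√2 / 2) ^ (2 * k + 1) = √2 / (2 * 2 ^ k) := by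
    rw [pow_succ, pow_mul, div_pow, sq, hsq, show (2 : ℝ) / 2 ^ 2 = 2⁻¹ by norm_num, inv_pow]
    field_simp
  rw [hpow]
  field_simp
  rw [sq_sqrt zero_le_two]

lemma hasSum_one_div_two_pow_mul_two_mul_add_three :
    HasSum (fun k : ℕ => 1 / (2 ^ k * (2 * (k : ℝ) + 3))) (2 * (√2 * log (1 + √2) - 1)) := by
  have h := (hasSum_nat_add_iff' 1).mpr hasSum_one_div_two_pow_mul_two_mul_add_one
  simp only [Finset.range_one, Finset.sum_singleton, CharP.cast_eq_zero] at h
  rw [show 2 * (√2 * log (1 + √2) - 1) = 2 * (√2 * log (1 + √2) - 1 / (2 ^ 0 * (2 * 0 + 1)))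
    by norm_num]
  refine (h.mul_left 2).congr_fun fun k => ?_
  push_cast
  field_simp
  ring

lemma hasSum_one_div_two_pow_mul_add_one :
    HasSum (fun k : ℕ => 1 / (2 ^ k * ((k : ℝ) + 1))) (2 * log 2) := by
  have h := hasSum_pow_div_log_of_abs_lt_one (x := 1 / 2) (by norm_num [abs_of_pos])
  rw [show (1 : ℝ) - 1 / 2 = 2⁻¹ by norm_num, log_inv, neg_neg] at h
  refine (h.mul_left 2).congr_fun fun k => ?_
  simp only [one_div, inv_pow]
  field_simp
  rw [pow_succ]

lemma one_div_two_pow_mul_odd_mul_succ_mul_odd (k : ℕ) :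
    1 / (2 ^ (k + 2) * (2 * (k : ℝ) + 1) * (k + 1) * (2 * k + 3)) =
      1 / 4 * (1 / (2 ^ k * (2 * (k : ℝ) + 1)) - 1 / (2 ^ k * ((k : ℝ) + 1)) +
        1 / (2 ^ k * (2 * (k : ℝ) + 3))) := by
  field_simp
  ring

theorem stmt_9 :
    ∑' k : ℕ, 1 / (2 ^ (k + 2) * (2 * (k : ℝ) + 1) * (k + 1) * (2 * k + 3)) =
      (3 / (2 * Real.sqrt 2)) * Real.log (1 + Real.sqrt 2) - (1 / 2) * (Real.log 2 + 1) := by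
  have h := ((hasSum_one_div_two_pow_mul_two_mul_add_one.sub
    hasSum_one_div_two_pow_mul_add_one).add
    hasSum_one_div_two_pow_mul_two_mul_add_three).mul_left (1 / 4)
  simp only [← one_div_two_pow_mul_odd_mul_succ_mul_odd] at h
  rw [h.tsum_eq]
  have hsq : √2 * √2 = 2 := mul_self_sqrt zero_le_two
  field_simp
  linear_combination (6 * log (1 + √2)) * hsq
end

section
/- The series sum over k≥1 of 4^k/(5^k·(2k-1)(2k)(2k+1)) equals -(1/2)ln(5) + (27/(4√5))·ln(α) - 1/2, where α = (1+√5)/2. -/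
/-!
With x = 2/√5, so that x² = 4/5, partial fractions split the series into the odd-power series
of `artanh x` and the series of `-log (1 - x²)`. The golden ratio enters through
(1 + x)/(1 - x) = (√5 + 2)² = φ⁶, whence `artanh x = 3 log φ`.
-/

open Real

theorem hasSum_artanh {x : ℝ} (hx : |x| < 1) :
    HasSum (fun k : ℕ => x ^ (2 * k + 1) / (2 * k + 1)) (artanh x) := by
  obtain ⟨hx₁, hx₂⟩ := abs_lt.mp hx
  rw [artanh_eq_half_log ⟨hx₁.le, hx₂.le⟩, log_div (by linarith) (by linarith)]
  refine ((hasSum_log_sub_log_of_abs_lt_one hx).mul_left (1 / 2)).congr_fun fun k => ?_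
  ring

theorem hasSum_pow_div_three_consecutive {x : ℝ} (hx₀ : x ≠ 0) (hx : |x| < 1) :
    HasSum (fun k : ℕ => x ^ (2 * k + 2) / ((2 * k + 1) * (2 * k + 2) * (2 * k + 3)))
      ((x + x⁻¹) / 2 * artanh x + log (1 - x ^ 2) / 2 - 1 / 2) := by
  have hodd := hasSum_artanh hx
  have hodd_succ : HasSum (fun k : ℕ => x ^ (2 * k + 3) / (2 * k + 3)) (artanh x - x) := by
    rw [← hasSum_nat_add_iff' 1] at hodd
    simpa [mul_add, add_assoc, show (2 : ℝ) + 1 = 3 by norm_num] using hodd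
  have heven : HasSum (fun k : ℕ => x ^ (2 * k + 2) / (2 * k + 2)) (-log (1 - x ^ 2) / 2) := by
    have hx2 : |x ^ 2| < 1 := by rw [abs_pow]; exact pow_lt_one₀ (abs_nonneg x) hx two_ne_zero
    refine ((hasSum_pow_div_log_of_abs_lt_one hx2).div_const 2).congr_fun fun k => ?_
    rw [← pow_mul]
    field_simp
    ring
  have hsum := ((hodd.mul_left (x / 2)).sub heven).add (hodd_succ.mul_left (x⁻¹ / 2))
  rw [show x / 2 * artanh x - -log (1 - x ^ 2) / 2 + x⁻¹ / 2 * (artanh x - x)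
      = (x + x⁻¹) / 2 * artanh x + log (1 - x ^ 2) / 2 - 1 / 2 by field_simp; ring] at hsum
  -- 1/((m - 1) m (m + 1)) = 1/(2(m - 1)) - 1/m + 1/(2(m + 1)) with m = 2k + 2
  refine hsum.congr_fun fun k => ?_
  field_simp
  ring

theorem sq_two_div_sqrt_five : (2 / √5) ^ 2 = 4 / 5 := by
  rw [div_pow, sq_sqrt (by norm_num)]
  norm_num

theorem abs_two_div_sqrt_five_lt_one : |2 / √5| < 1 :=
  (sq_lt_one_iff_abs_lt_one _).mp (by rw [sq_two_div_sqrt_five]; norm_num)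

theorem goldenRatio_pow_three : goldenRatio ^ 3 = 2 + √5 := by
  rw [pow_succ, goldenRatio_sq, goldenRatio]
  linear_combination (1 / 4 : ℝ) * sq_sqrt (show (0 : ℝ) ≤ 5 by norm_num)

theorem artanh_two_div_sqrt_five : artanh (2 / √5) = 3 * log goldenRatio := by
  have h5 : √5 ^ 2 = 5 := sq_sqrt (by norm_num)
  have hx : 2 / √5 ∈ Set.Icc (-1) 1 := abs_le.mp abs_two_div_sqrt_five_lt_one.le
  have hφ : (1 + 2 / √5) / (1 - 2 / √5) = (goldenRatio ^ 3) ^ 2 := by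
    have : √5 - 2 ≠ 0 := fun h => by nlinarith
    rw [goldenRatio_pow_three]
    field_simp
    linear_combination -(√5 + 2) * h5
  rw [artanh_eq_half_log hx, hφ, ← pow_mul, log_pow]
  push_cast
  ring

theorem stmt_13 :
    ∑' k : ℕ, 4 ^ (k + 1) / (5 ^ (k + 1) * (2 * (k : ℝ) + 1) * (2 * k + 2) * (2 * k + 3)) =
      -(1 / 2) * Real.log 5
        + (27 / (4 * Real.sqrt 5)) * Real.log ((1 + Real.sqrt 5) / 2) - 1 / 2 := by
  have h := hasSum_pow_div_three_consecutive (by positivity) abs_two_div_sqrt_five_lt_one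
  rw [artanh_two_div_sqrt_five, sq_two_div_sqrt_five, show (1 : ℝ) - 4 / 5 = 5⁻¹ by norm_num,
    log_inv] at h
  refine (h.congr_fun fun k => ?_).tsum_eq.trans ?_
  · rw [show 2 * k + 2 = 2 * (k + 1) by ring, pow_mul, sq_two_div_sqrt_five, div_pow]
    field_simp
  · have h5 : √5 ^ 2 = 5 := sq_sqrt (by norm_num)
    field_simp
    linear_combination (12 * log goldenRatio) * h5
end

section
/- The series sum over k≥1 of 1/(α^(2k)·(2k-1)(2k+1)) equals 1/2 - (3/4)ln(α), where α = (1+√5)/2 is the golden ratio. -/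
/-! Writing `1 / ((2k+1)(2k+3)) = (1/(2k+1) - 1/(2k+3)) / 2` telescopes the series into two shifted
copies of the odd-power series of `log (1 + x) - log (1 - x)`, evaluated at `x = φ⁻¹`.
There `1 - x² = x` and `(1 + x) / (1 - x) = φ³`, which produces `1/2 - (3/4) log φ`. -/

open Real

theorem hasSum_pow_div_odd_mul_odd {x : ℝ} (hx : |x| < 1) (hx0 : x ≠ 0) :
    HasSum (fun k : ℕ => x ^ (2 * k + 2) / ((2 * k + 1) * (2 * k + 3)))
      (1 / 2 - (1 - x ^ 2) / (4 * x) * (log (1 + x) - log (1 - x))) := by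
  set L := log (1 + x) - log (1 - x)
  have hL := hasSum_log_sub_log_of_abs_lt_one hx
  have hL_shift : HasSum (fun k : ℕ => (2 : ℝ) * (1 / (2 * (k + 1 : ℕ) + 1)) * x ^ (2 * (k + 1 : ℕ) + 1))
      (L - 2 * x) := by
    simpa using (hasSum_nat_add_iff' 1).mpr hL
  have h_split : (fun k : ℕ => x ^ (2 * k + 2) / ((2 * k + 1) * (2 * k + 3))) = fun k : ℕ =>
      x / 4 * ((2 : ℝ) * (1 / (2 * k + 1)) * x ^ (2 * k + 1)) -
        1 / (4 * x) * ((2 : ℝ) * (1 / (2 * (k + 1 : ℕ) + 1)) * x ^ (2 * (k + 1 : ℕ) + 1)) := by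
    funext k
    push_cast
    field_simp
    ring
  have h_value : 1 / 2 - (1 - x ^ 2) / (4 * x) * L = x / 4 * L - 1 / (4 * x) * (L - 2 * x) := by
    field_simp
    ring
  rw [h_split, h_value]
  exact (hL.mul_left (x / 4)).sub (hL_shift.mul_left (1 / (4 * x)))

theorem tsum_inv_pow_mul_odd_mul_odd_of_sq_eq_add_one {α : ℝ} (hα : 1 < α) (hsq : α ^ 2 = α + 1) :
    ∑' k : ℕ, 1 / (α ^ (2 * k + 2) * (2 * (k : ℝ) + 1) * (2 * k + 3)) = 1 / 2 - 3 / 4 * log α := by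
  have hα0 : α ≠ 0 := by positivity
  have hx : |α⁻¹| < 1 := by
    rw [abs_inv, abs_of_pos (by positivity)]
    exact inv_lt_one_of_one_lt₀ hα
  have h_inv : α⁻¹ = α - 1 := by
    rw [inv_eq_iff_eq_inv, eq_comm, inv_eq_of_mul_eq_one_left]
    linear_combination hsq
  have hsum := hasSum_pow_div_odd_mul_odd hx (inv_ne_zero hα0)
  rw [show 1 - α⁻¹ ^ 2 = α⁻¹ by rw [h_inv]; linear_combination -hsq,
    show 1 - α⁻¹ = α⁻¹ ^ 2 by rw [h_inv]; linear_combination -hsq,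
    show 1 + α⁻¹ = α by rw [h_inv]; ring,
    log_pow, log_inv, div_mul_cancel_right₀ (inv_ne_zero hα0)] at hsum
  convert hsum.tsum_eq using 1
  · simp only [inv_pow, div_eq_mul_inv, one_mul, mul_inv, mul_assoc]
  · push_cast
    ring

theorem stmt_14 :
    ∑' k : ℕ, 1 / (((1 + Real.sqrt 5) / 2) ^ (2 * k + 2) * (2 * (k : ℝ) + 1) * (2 * k + 3)) =
      1 / 2 - (3 / 4) * Real.log ((1 + Real.sqrt 5) / 2) :=
  tsum_inv_pow_mul_odd_mul_odd_of_sq_eq_add_one one_lt_goldenRatio goldenRatio_sq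
end

section
/- The series sum over k≥1 of 1/(α^(2k)·(2k-1)(2k)(2k+1)) equals (1/2)((3√5/2)ln(α) - ln(α) - 1), where α = (1+√5)/2 is the golden ratio. -/
/-!
With `n = 2k + 2`, partial fractions give `1 / ((n - 1) n (n + 1)) = (1/(n-1) - 2/n + 1/(n+1)) / 2`,
so for `0 < |x| < 1` the series `∑ x ^ n / ((n - 1) n (n + 1))` is a combination of the odd part
`artanh x = (log (1 + x) - log (1 - x)) / 2` and the even part `-log (1 - x²) / 2` of the
logarithmic series. At `x = φ⁻¹ = φ - 1` one has `1 + x = φ`, `1 - x = φ⁻²`, `1 - x² = φ⁻¹`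
and `x + x⁻¹ = √5`, which turns the value into the stated one.
-/

open Real
open scoped goldenRatio

namespace Real

theorem hasSum_pow_odd_div {x : ℝ} (hx : |x| < 1) :
    HasSum (fun k : ℕ => x ^ (2 * k + 1) / (2 * k + 1)) ((log (1 + x) - log (1 - x)) / 2) :=
  ((hasSum_log_sub_log_of_abs_lt_one hx).div_const 2).congr_fun fun k => by field_simp

theorem hasSum_pow_odd_div_succ {x : ℝ} (hx : |x| < 1) :
    HasSum (fun k : ℕ => x ^ (2 * k + 3) / (2 * k + 3))
      ((log (1 + x) - log (1 - x)) / 2 - x) := by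
  have h := (hasSum_nat_add_iff' 1).mpr (hasSum_pow_odd_div hx)
  norm_num at h
  exact h.congr_fun fun k => by ring_nf

theorem hasSum_pow_even_div {x : ℝ} (hx : |x| < 1) :
    HasSum (fun k : ℕ => x ^ (2 * k + 2) / (2 * k + 2)) (-log (1 - x ^ 2) / 2) := by
  have hx2 : |x ^ 2| < 1 := by
    rw [abs_pow]; exact pow_lt_one₀ (abs_nonneg x) hx two_ne_zero
  refine ((hasSum_pow_div_log_of_abs_lt_one hx2).div_const 2).congr_fun fun k => ?_
  rw [← pow_mul]
  field_simp
  ring_nf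

theorem pow_div_consecutive_triple_eq {x : ℝ} (hx : x ≠ 0) (k : ℕ) :
    x ^ (2 * k + 2) / ((2 * k + 1) * (2 * k + 2) * (2 * k + 3)) =
      (x * (x ^ (2 * k + 1) / (2 * k + 1)) - 2 * (x ^ (2 * k + 2) / (2 * k + 2))
        + x⁻¹ * (x ^ (2 * k + 3) / (2 * k + 3))) / 2 := by
  field_simp
  ring

theorem hasSum_pow_div_consecutive_triple {x : ℝ} (hx : |x| < 1) (hx0 : x ≠ 0) :
    HasSum (fun k : ℕ => x ^ (2 * k + 2) / ((2 * k + 1) * (2 * k + 2) * (2 * k + 3)))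
      (((x + x⁻¹) * ((log (1 + x) - log (1 - x)) / 2) + log (1 - x ^ 2) - 1) / 2) := by
  have h := ((((hasSum_pow_odd_div hx).mul_left x).sub ((hasSum_pow_even_div hx).mul_left 2)).add
    ((hasSum_pow_odd_div_succ hx).mul_left x⁻¹)).div_const 2
  convert h.congr_fun (pow_div_consecutive_triple_eq hx0) using 1
  · rfl
  · field_simp; ring

theorem one_add_inv_goldenRatio : 1 + φ⁻¹ = φ := by
  rw [inv_goldenRatio]; exact one_sub_goldenRatio

theorem one_sub_inv_goldenRatio : 1 - φ⁻¹ = (φ ^ 2)⁻¹ := by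
  rw [inv_goldenRatio, ← inv_pow, inv_goldenRatio, neg_sq, goldenConj_sq]; ring

theorem one_sub_inv_goldenRatio_sq : 1 - φ⁻¹ ^ 2 = φ⁻¹ := by
  rw [inv_goldenRatio, neg_sq, goldenConj_sq]; ring

theorem abs_inv_goldenRatio_lt_one : |φ⁻¹| < 1 := by
  rw [abs_of_pos (inv_pos.2 goldenRatio_pos)]
  exact inv_lt_one_of_one_lt₀ one_lt_goldenRatio

end Real

theorem stmt_15 :
    ∑' k : ℕ,
        1 / (((1 + Real.sqrt 5) / 2) ^ (2 * k + 2) * (2 * (k : ℝ) + 1) * (2 * k + 2) * (2 * k + 3)) =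
      (1 / 2) * ((3 * Real.sqrt 5 / 2) * Real.log ((1 + Real.sqrt 5) / 2)
        - Real.log ((1 + Real.sqrt 5) / 2) - 1) := by
  change ∑' k : ℕ, 1 / (φ ^ (2 * k + 2) * (2 * (k : ℝ) + 1) * (2 * k + 2) * (2 * k + 3)) =
    1 / 2 * (3 * √5 / 2 * log φ - log φ - 1)
  have h := hasSum_pow_div_consecutive_triple abs_inv_goldenRatio_lt_one
    (inv_ne_zero goldenRatio_ne_zero)
  refine ((h.congr_fun fun k => ?_).tsum_eq).trans ?_
  · rw [inv_pow]; field_simp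
  · rw [inv_inv, one_add_inv_goldenRatio, one_sub_inv_goldenRatio, one_sub_inv_goldenRatio_sq,
      log_inv, log_inv, log_pow, inv_goldenRatio, ← sub_eq_neg_add, goldenRatio_sub_goldenConj]
    ring
end
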